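/- Let q ≥ 5 be a prime power. Then c(q) = ξ_D(q-1) + 2, where c(q) is the minimum number of radius-1 extended balls needed to cover F_q³ and ξ_D(q-1) is the minimum number of quowers needed to cover the (q-1)×(q-1) toroidal board minus its northeast diagonal. -/
import Mathlib


open Projectivization Classical

variable (F : Type*) [Field F] [Fintype F] [DecidableEq F]

noncomputable def cardPt (i : Fin 3) : Projectivization F (Fin 3 → F) :=
  Projectivization.mk F (Pi.single i 1) (by intro h; simpa using congrFun h i)

noncomputable def pline (u v : Projectivization F (Fin 3 → F)) :
    Set (Projectivization F (Fin 3 → F)) :=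
  if u = v then {u}
  else {p | p.submodule ≤ u.submodule ⊔ v.submodule}

noncomputable def windRose (p : Projectivization F (Fin 3 → F)) :
    Set (Projectivization F (Fin 3 → F)) :=
  pline F p (cardPt F 0) ∪ pline F p (cardPt F 1) ∪ pline F p (cardPt F 2)

noncomputable def nnz (p : Projectivization F (Fin 3 → F)) : ℕ :=
  (Finset.univ.filter fun i : Fin 3 => p.rep i ≠ 0).card

def IsCardinal (p : Projectivization F (Fin 3 → F)) : Prop := nnz F p = 1
def IsCoast (p : Projectivization F (Fin 3 → F)) : Prop := nnz F p = 2
def IsMidland (p : Projectivization F (Fin 3 → F)) : Prop := nnz F p = 3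

def extBall (v : Fin 3 → F) : Set (Fin 3 → F) :=
  {w | ∃ u ∈ Submodule.span F ({v} : Set (Fin 3 → F)), hammingDist w u ≤ 1}

def diag (n : ℕ) (p : ZMod n × ZMod n) : Set (ZMod n × ZMod n) :=
  {q | ∃ t : ZMod n, q = (p.1 + t, p.2 + t)}

def horiz (n : ℕ) (p : ZMod n × ZMod n) : Set (ZMod n × ZMod n) :=
  {q | ∃ t : ZMod n, q = (t, p.2)}

def vert (n : ℕ) (p : ZMod n × ZMod n) : Set (ZMod n × ZMod n) :=
  {q | ∃ t : ZMod n, q = (p.1, t)}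

def quower (n : ℕ) (p : ZMod n × ZMod n) : Set (ZMod n × ZMod n) :=
  diag n p ∪ horiz n p ∪ vert n p

noncomputable def xi (n : ℕ) : ℕ :=
  sInf {k | ∃ X : Set (ZMod n × ZMod n), X.ncard = k ∧ (⋃ x ∈ X, quower n x) = Set.univ}

noncomputable def xiD (n : ℕ) : ℕ :=
  sInf {k | ∃ X : Set (ZMod n × ZMod n), X.ncard = k ∧
    Set.univ \ diag n (1, 1) ⊆ ⋃ x ∈ X, quower n x}

noncomputable def shortCoverNum (F : Type*) [Field F] [Fintype F] [DecidableEq F] : ℕ :=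
  sInf {k | ∃ v : Fin k → (Fin 3 → F), (∀ i, v i ≠ 0) ∧
    (⋃ i, extBall F (v i)) = Set.univ}

/- ------------------------------------------------------------------ -/
/- Auxiliary combinatorial lemmas on the toroidal board                -/
/- ------------------------------------------------------------------ -/

namespace Stmt19Aux

lemma mem_quower_iff {n : ℕ} (p q : ZMod n × ZMod n) :
    q ∈ quower n p ↔ q.1 = p.1 ∨ q.2 = p.2 ∨ q.2 - q.1 = p.2 - p.1 := by
  constructor
  · rintro ((⟨t, rfl⟩ | ⟨t, rfl⟩) | ⟨t, rfl⟩)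
    · right; right; ring
    · right; left; rfl
    · left; rfl
  · rintro (h | h | h)
    · right; exact ⟨q.2, by rw [← h]⟩
    · left; right; exact ⟨q.1, by rw [← h]⟩
    · left; left; exact ⟨q.1 - p.1, by
        have h2 : q.2 = p.2 + (q.1 - p.1) := by linear_combination h
        have h1 : q.1 = p.1 + (q.1 - p.1) := by ring
        exact Prod.ext h1 h2⟩

def CoversOffDiag {n : ℕ} (X : Set (ZMod n × ZMod n)) : Prop :=
  ∀ s t : ZMod n, s ≠ t → (s, t) ∈ ⋃ x ∈ X, quower n x

lemma covers_target_of_offdiag {n : ℕ} {X : Set (ZMod n × ZMod n)}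
    (h : CoversOffDiag X) :
    Set.univ \ diag n (1, 1) ⊆ ⋃ x ∈ X, quower n x := by
  rintro ⟨s, t⟩ ⟨-, hd⟩
  refine h s t fun hst => hd ⟨s - 1, ?_⟩
  subst hst
  exact Prod.ext (by ring) (by ring)

lemma quower_mem_of {n : ℕ} {s t : ZMod n} {p : ZMod n × ZMod n} {X : Set (ZMod n × ZMod n)}
    (hp : p ∈ X) (h : s = p.1 ∨ t = p.2 ∨ t - s = p.2 - p.1) :
    (s, t) ∈ ⋃ x ∈ X, quower n x :=
  Set.mem_biUnion hp ((mem_quower_iff p (s, t)).2 h)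

lemma transform_diag {n : ℕ} (R : Set (ZMod n × ZMod n)) (δ : ZMod n)
    (h : ∀ s t : ZMod n, t - s ≠ δ → (s, t) ∈ ⋃ x ∈ R, quower n x) :
    CoversOffDiag ((fun x : ZMod n × ZMod n => (x.1, x.2 - δ)) '' R) := by
  intro s t hst
  have h1 : (t + δ) - s ≠ δ := fun hc => hst (by linear_combination hc.symm)
  obtain ⟨p, hpR, hmem⟩ := Set.mem_iUnion₂.1 (h s (t + δ) h1)
  rw [mem_quower_iff] at hmem
  refine quower_mem_of (Set.mem_image_of_mem _ hpR) ?_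
  rcases hmem with h2 | h2 | h2
  · exact Or.inl h2
  · exact Or.inr (Or.inl (by simpa using by linear_combination h2))
  · exact Or.inr (Or.inr (by simpa using by linear_combination h2))

lemma transform_horiz {n : ℕ} (R : Set (ZMod n × ZMod n)) (b0 : ZMod n)
    (h : ∀ s t : ZMod n, t ≠ b0 → (s, t) ∈ ⋃ x ∈ R, quower n x) :
    CoversOffDiag ((fun x : ZMod n × ZMod n => (x.1, x.1 - x.2 + b0)) '' R) := by
  intro s t hst
  have h1 : s - t + b0 ≠ b0 := fun hc => hst (by linear_combination hc)
  obtain ⟨p, hpR, hmem⟩ := Set.mem_iUnion₂.1 (h s (s - t + b0) h1)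
  rw [mem_quower_iff] at hmem
  refine quower_mem_of (Set.mem_image_of_mem _ hpR) ?_
  rcases hmem with h2 | h2 | h2
  · exact Or.inl h2
  · exact Or.inr (Or.inr (by simpa using by linear_combination -h2))
  · exact Or.inr (Or.inl (by simpa using by linear_combination -h2))

lemma transform_vert {n : ℕ} (R : Set (ZMod n × ZMod n)) (a0 : ZMod n)
    (h : ∀ s t : ZMod n, s ≠ a0 → (s, t) ∈ ⋃ x ∈ R, quower n x) :
    CoversOffDiag ((fun x : ZMod n × ZMod n => (x.2 - x.1, x.2 - a0)) '' R) := by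
  intro s t hst
  have h1 : t + a0 - s ≠ a0 := fun hc => hst (by linear_combination -hc)
  obtain ⟨p, hpR, hmem⟩ := Set.mem_iUnion₂.1 (h (t + a0 - s) (t + a0) h1)
  rw [mem_quower_iff] at hmem
  refine quower_mem_of (Set.mem_image_of_mem _ hpR) ?_
  rcases hmem with h2 | h2 | h2
  · exact Or.inr (Or.inr (by simpa using by linear_combination h2))
  · exact Or.inr (Or.inl (by simpa using by linear_combination h2))
  · exact Or.inl (by simpa using by linear_combination h2)

def XmainSet (n : ℕ) : Set (ZMod n × ZMod n) :=
  {((0 : ZMod n), (1 : ZMod n)), ((1 : ZMod n), (0 : ZMod n))} ∪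
    (fun x : ZMod n => (x, x)) '' {x : ZMod n | x ∉ ({0, 1, 2, 3} : Set (ZMod n))}

lemma XmainSet_covers (n : ℕ) : CoversOffDiag (XmainSet n) := by
  intro s t hst
  have m01 : ((0 : ZMod n), (1 : ZMod n)) ∈ XmainSet n := Or.inl (Or.inl rfl)
  have m10 : ((1 : ZMod n), (0 : ZMod n)) ∈ XmainSet n := Or.inl (Or.inr rfl)
  by_cases hs : s ∈ ({0, 1, 2, 3} : Set (ZMod n))
  · by_cases ht : t ∈ ({0, 1, 2, 3} : Set (ZMod n))
    · rcases hs with hs | hs | hs | hs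
      · exact quower_mem_of m01 (Or.inl hs)
      · exact quower_mem_of m10 (Or.inl hs)
      · rcases ht with ht | ht | ht | ht
        · exact quower_mem_of m10 (Or.inr (Or.inl ht))
        · exact quower_mem_of m01 (Or.inr (Or.inl ht))
        · exact absurd (hs.trans ht.symm) hst
        · refine quower_mem_of m01 (Or.inr (Or.inr ?_))
          rw [hs, ht]; norm_num
      · rcases ht with ht | ht | ht | ht
        · exact quower_mem_of m10 (Or.inr (Or.inl ht))
        · exact quower_mem_of m01 (Or.inr (Or.inl ht))
        · refine quower_mem_of m10 (Or.inr (Or.inr ?_))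
          rw [hs, ht]; norm_num
        · exact absurd (hs.trans ht.symm) hst
    · exact quower_mem_of (Or.inr ⟨t, ht, rfl⟩) (Or.inr (Or.inl rfl))
  · exact quower_mem_of (Or.inr ⟨s, hs, rfl⟩) (Or.inl rfl)

lemma zmod_distinct (n : ℕ) (hn : 4 ≤ n) :
    ({0, 1, 2, 3} : Set (ZMod n)).ncard = 4 := by
  haveI : NeZero n := ⟨by omega⟩
  have hv : ∀ m : ℕ, m < n → ((m : ZMod n)).val = m := fun m hm => ZMod.val_natCast_of_lt hm
  have h0 : ((0 : ZMod n)).val = 0 := by simpa using hv 0 (by omega)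
  have h1 : ((1 : ZMod n)).val = 1 := by simpa using hv 1 (by omega)
  have h2 : ((2 : ZMod n)).val = 2 := by
    have := hv 2 (by omega); simpa [Nat.cast_ofNat] using this
  have h3 : ((3 : ZMod n)).val = 3 := by
    have := hv 3 (by omega); simpa [Nat.cast_ofNat] using this
  have d01 : (0 : ZMod n) ≠ 1 := fun h => by have := h0 ▸ h1 ▸ congrArg ZMod.val h; omega
  have d02 : (0 : ZMod n) ≠ 2 := fun h => by have := h0 ▸ h2 ▸ congrArg ZMod.val h; omega
  have d03 : (0 : ZMod n) ≠ 3 := fun h => by have := h0 ▸ h3 ▸ congrArg ZMod.val h; omega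
  have d12 : (1 : ZMod n) ≠ 2 := fun h => by have := h1 ▸ h2 ▸ congrArg ZMod.val h; omega
  have d13 : (1 : ZMod n) ≠ 3 := fun h => by have := h1 ▸ h3 ▸ congrArg ZMod.val h; omega
  have d23 : (2 : ZMod n) ≠ 3 := fun h => by have := h2 ▸ h3 ▸ congrArg ZMod.val h; omega
  rw [Set.ncard_insert_of_notMem (by simp [d01, d02, d03]),
      Set.ncard_insert_of_notMem (by simp [d12, d13]),
      Set.ncard_insert_of_notMem (by simp [d23]), Set.ncard_singleton]

lemma XmainSet_ncard (n : ℕ) (hn : 4 ≤ n) : (XmainSet n).ncard ≤ n - 2 := by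
  haveI : NeZero n := ⟨by omega⟩
  have h1 : (XmainSet n).ncard ≤
      ({((0 : ZMod n), (1 : ZMod n)), ((1 : ZMod n), (0 : ZMod n))} : Set (ZMod n × ZMod n)).ncard
      + ((fun x : ZMod n => (x, x)) '' {x : ZMod n | x ∉ ({0, 1, 2, 3} : Set (ZMod n))}).ncard :=
    Set.ncard_union_le _ _
  have h2 : ({((0 : ZMod n), (1 : ZMod n)), ((1 : ZMod n), (0 : ZMod n))} :
      Set (ZMod n × ZMod n)).ncard ≤ 2 :=
    (Set.ncard_insert_le _ _).trans (by simp)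
  have h3 : ((fun x : ZMod n => (x, x)) '' {x : ZMod n | x ∉ ({0, 1, 2, 3} : Set (ZMod n))}).ncard
      ≤ n - 4 := by
    refine (Set.ncard_image_le (Set.toFinite _)).trans ?_
    have he : {x : ZMod n | x ∉ ({0, 1, 2, 3} : Set (ZMod n))}
        = Set.univ \ ({0, 1, 2, 3} : Set (ZMod n)) := by ext x; simp
    rw [he, Set.ncard_diff (Set.subset_univ _), zmod_distinct n hn, Set.ncard_univ]
    simp [Nat.card_eq_fintype_card, ZMod.card]
  omega

/- ------------------------------------------------------------------ -/
/- Field-side lemmas                                                   -/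
/- ------------------------------------------------------------------ -/

variable {F : Type*} [Field F] [Fintype F] [DecidableEq F]

lemma ham_le_one_iff (w u : Fin 3 → F) :
    hammingDist w u ≤ 1 ↔
      (w 0 = u 0 ∧ w 1 = u 1) ∨ (w 0 = u 0 ∧ w 2 = u 2) ∨ (w 1 = u 1 ∧ w 2 = u 2) := by
  rw [hammingDist, Finset.card_filter, Fin.sum_univ_three]
  by_cases h0 : w 0 = u 0 <;> by_cases h1 : w 1 = u 1 <;> by_cases h2 : w 2 = u 2 <;>
    simp [h0, h1, h2]

lemma mem_extBall_iff (v w : Fin 3 → F) :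
    w ∈ extBall F v ↔ ∃ c : F,
      (w 0 = c * v 0 ∧ w 1 = c * v 1) ∨ (w 0 = c * v 0 ∧ w 2 = c * v 2)
        ∨ (w 1 = c * v 1 ∧ w 2 = c * v 2) := by
  constructor
  · rintro ⟨u, hu, hham⟩
    obtain ⟨c, rfl⟩ := Submodule.mem_span_singleton.1 hu
    refine ⟨c, ?_⟩
    simpa [Pi.smul_apply, smul_eq_mul] using (ham_le_one_iff w (c • v)).1 hham
  · rintro ⟨c, hc⟩
    refine ⟨c • v, Submodule.mem_span_singleton.2 ⟨c, rfl⟩, (ham_le_one_iff _ _).2 ?_⟩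
    simpa [Pi.smul_apply, smul_eq_mul] using hc

section Exp
variable {n : ℕ} [NeZero n]

lemma exp_bijective (g : Fˣ) (hg : orderOf g = n) (hcardu : Fintype.card Fˣ = n) :
    Function.Bijective (fun a : ZMod n => g ^ a.val) := by
  rw [Fintype.bijective_iff_injective_and_card]
  constructor
  · intro a b hab
    simp only at hab
    have := pow_eq_pow_iff_modEq.1 hab
    rw [hg] at this
    have ha := ZMod.val_lt a
    have hb := ZMod.val_lt b
    have hv : a.val = b.val := by
      have h2 := this
      unfold Nat.ModEq at h2
      rwa [Nat.mod_eq_of_lt ha, Nat.mod_eq_of_lt hb] at h2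
    exact ZMod.val_injective n hv
  · rw [ZMod.card, hcardu]

noncomputable def expE (g : Fˣ) (hg : orderOf g = n) (hcardu : Fintype.card Fˣ = n) :
    ZMod n ≃ Fˣ :=
  Equiv.ofBijective _ (exp_bijective g hg hcardu)

lemma expE_add (g : Fˣ) (hg : orderOf g = n) (hcardu : Fintype.card Fˣ = n) (a b : ZMod n) :
    expE g hg hcardu (a + b) = expE g hg hcardu a * expE g hg hcardu b := by
  show g ^ (a + b).val = g ^ a.val * g ^ b.val
  rw [← pow_add]
  have h : (a + b).val = (a.val + b.val) % n := by rw [ZMod.val_add]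
  rw [h]
  conv_rhs => rw [← pow_mod_orderOf]
  rw [hg]

end Exp

section Classify
variable {n : ℕ} [NeZero n]

lemma exists_expE (hcardu : Fintype.card Fˣ = n) :
    ∃ E : ZMod n ≃ Fˣ, ∀ a b, E (a + b) = E a * E b := by
  obtain ⟨g, hg⟩ := IsCyclic.exists_generator (α := Fˣ)
  have horder : orderOf g = n := by
    rw [orderOf_eq_card_of_forall_mem_zpowers hg, Nat.card_eq_fintype_card, hcardu]
  exact ⟨expE g horder hcardu, expE_add g horder hcardu⟩

variable (E : ZMod n ≃ Fˣ)

noncomputable def lg (x : F) : ZMod n :=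
  if h : x = 0 then 0 else E.symm (Units.mk0 x h)

lemma lg_spec (x : F) (hx : x ≠ 0) : ((E (lg E x) : Fˣ) : F) = x := by
  rw [lg, dif_neg hx, Equiv.apply_symm_apply]
  rfl

lemma lg_unique (x : F) (hx : x ≠ 0) (a : ZMod n) (h : ((E a : Fˣ) : F) = x) :
    a = lg E x := by
  apply E.injective
  apply Units.ext
  rw [h, lg_spec E x hx]

lemma E_sub_mul (hE : ∀ a b : ZMod n, E (a + b) = E a * E b) (a b : ZMod n) :
    ((E (a - b) : Fˣ) : F) * ((E b : Fˣ) : F) = ((E a : Fˣ) : F) := by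
  have h := hE (a - b) b
  rw [sub_add_cancel] at h
  exact_mod_cast congrArg Units.val h.symm

/-- midland -/
def MidP (u : Fin 3 → F) : Prop := u 0 ≠ 0 ∧ u 1 ≠ 0 ∧ u 2 ≠ 0
/-- coasts -/
def C12P (u : Fin 3 → F) : Prop := u 0 ≠ 0 ∧ u 1 ≠ 0 ∧ u 2 = 0
def C13P (u : Fin 3 → F) : Prop := u 0 ≠ 0 ∧ u 1 = 0 ∧ u 2 ≠ 0
def C23P (u : Fin 3 → F) : Prop := u 0 = 0 ∧ u 1 ≠ 0 ∧ u 2 ≠ 0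
/-- cardinal : at least two coordinates vanish -/
def CarP (u : Fin 3 → F) : Prop :=
  (u 1 = 0 ∧ u 2 = 0) ∨ (u 0 = 0 ∧ u 2 = 0) ∨ (u 0 = 0 ∧ u 1 = 0)

noncomputable def tqF (u : Fin 3 → F) : ZMod n × ZMod n :=
  if MidP u then (lg E (u 1 / u 0), lg E (u 2 / u 0))
  else if C12P u then (lg E (u 1 / u 0), lg E (u 1 / u 0))
  else if C13P u then (lg E (u 2 / u 0), lg E (u 2 / u 0))
  else if C23P u then (0, lg E (u 2 / u 1))
  else (0, 0)

lemma tqF_mid {u : Fin 3 → F} (h : MidP u) :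
    tqF E u = (lg E (u 1 / u 0), lg E (u 2 / u 0)) := if_pos h

lemma tqF_c12 {u : Fin 3 → F} (h : C12P u) :
    tqF E u = (lg E (u 1 / u 0), lg E (u 1 / u 0)) := by
  rw [tqF, if_neg (fun hm => hm.2.2 h.2.2), if_pos h]

lemma tqF_c13 {u : Fin 3 → F} (h : C13P u) :
    tqF E u = (lg E (u 2 / u 0), lg E (u 2 / u 0)) := by
  rw [tqF, if_neg (fun hm => hm.2.1 h.2.1), if_neg (fun hc => hc.2.1 h.2.1), if_pos h]

lemma tqF_c23 {u : Fin 3 → F} (h : C23P u) :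
    tqF E u = (0, lg E (u 2 / u 1)) := by
  rw [tqF, if_neg (fun hm => hm.1 h.1), if_neg (fun hc => hc.1 h.1),
    if_neg (fun hc => hc.1 h.1), if_pos h]

lemma carP_not_c12 {u : Fin 3 → F} (h : CarP u) (h' : C12P u) : False := by
  rcases h with ⟨h1, -⟩ | ⟨h1, -⟩ | ⟨-, h1⟩
  exacts [h'.2.1 h1, h'.1 h1, h'.2.1 h1]

lemma carP_not_c13 {u : Fin 3 → F} (h : CarP u) (h' : C13P u) : False := by
  rcases h with ⟨-, h1⟩ | ⟨h1, -⟩ | ⟨h1, -⟩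
  exacts [h'.2.2 h1, h'.1 h1, h'.1 h1]

lemma carP_not_c23 {u : Fin 3 → F} (h : CarP u) (h' : C23P u) : False := by
  rcases h with ⟨h1, -⟩ | ⟨-, h1⟩ | ⟨-, h1⟩
  exacts [h'.2.1 h1, h'.2.2 h1, h'.2.1 h1]

lemma c12_not_c13 {u : Fin 3 → F} (h : C12P u) (h' : C13P u) : False := h.2.1 h'.2.1
lemma c12_not_c23 {u : Fin 3 → F} (h : C12P u) (h' : C23P u) : False := h.1 h'.1
lemma c13_not_c23 {u : Fin 3 → F} (h : C13P u) (h' : C23P u) : False := h.1 h'.1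

end Classify

section Classify2
variable {n : ℕ} [NeZero n]
variable (E : ZMod n ≃ Fˣ)

lemma matval (x y z : F) :
    (![x, y, z]) 0 = x ∧ (![x, y, z]) 1 = y ∧ (![x, y, z]) 2 = z := by
  refine ⟨rfl, rfl, rfl⟩

lemma torus_classify (hE : ∀ a b : ZMod n, E (a + b) = E a * E b)
    (u : Fin 3 → F) (s t : ZMod n)
    (hmem : (![(1 : F), ((E s : Fˣ) : F), ((E t : Fˣ) : F)]) ∈ extBall F u) :
    ¬ CarP u ∧ (s, t) ∈ quower n (tqF E u)
      ∧ (C12P u → s = (tqF E u).1) ∧ (C13P u → t = (tqF E u).2)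
      ∧ (C23P u → t - s = (tqF E u).2 - (tqF E u).1) := by
  obtain ⟨c, hc⟩ := (mem_extBall_iff u _).1 hmem
  simp only [Matrix.cons_val_zero, Matrix.cons_val_one, Matrix.head_cons,
    Matrix.cons_val_two, Matrix.tail_cons] at hc
  have hEs : ((E s : Fˣ) : F) ≠ 0 := Units.ne_zero _
  have hEt : ((E t : Fˣ) : F) ≠ 0 := Units.ne_zero _
  rcases hc with ⟨h0, h1⟩ | ⟨h0, h2⟩ | ⟨h1, h2⟩
  · -- agree on coordinates 0,1
    have hu0 : u 0 ≠ 0 := fun h => one_ne_zero (by rw [h0, h, mul_zero])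
    have hu1 : u 1 ≠ 0 := fun h => hEs (by rw [h1, h, mul_zero])
    have hkey : ((E s : Fˣ) : F) = u 1 / u 0 := by
      rw [eq_div_iff hu0]
      linear_combination u 0 * h1 - u 1 * h0
    have hs : s = lg E (u 1 / u 0) := lg_unique E _ (div_ne_zero hu1 hu0) s hkey
    by_cases hu2 : u 2 = 0
    · have hC : C12P u := ⟨hu0, hu1, hu2⟩
      have htq := tqF_c12 E hC
      refine ⟨?_, ?_, ?_, ?_, ?_⟩
      · rintro (⟨h, -⟩ | ⟨h, -⟩ | ⟨h, -⟩)
        exacts [hu1 h, hu0 h, hu0 h]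
      · exact (mem_quower_iff _ _).2 (Or.inl (by rw [htq]; exact hs))
      · intro _; rw [htq]; exact hs
      · intro hC'; exact absurd hC'.2.1 hu1
      · intro hC'; exact absurd hC'.1 hu0
    · have hM : MidP u := ⟨hu0, hu1, hu2⟩
      have htq := tqF_mid E hM
      refine ⟨?_, ?_, ?_, ?_, ?_⟩
      · rintro (⟨h, -⟩ | ⟨h, -⟩ | ⟨h, -⟩)
        exacts [hu1 h, hu0 h, hu0 h]
      · exact (mem_quower_iff _ _).2 (Or.inl (by rw [htq]; exact hs))
      · intro hC'; exact absurd hC'.2.2 hu2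
      · intro hC'; exact absurd hC'.2.1 hu1
      · intro hC'; exact absurd hC'.1 hu0
  · -- agree on coordinates 0,2
    have hu0 : u 0 ≠ 0 := fun h => one_ne_zero (by rw [h0, h, mul_zero])
    have hu2 : u 2 ≠ 0 := fun h => hEt (by rw [h2, h, mul_zero])
    have hkey : ((E t : Fˣ) : F) = u 2 / u 0 := by
      rw [eq_div_iff hu0]
      linear_combination u 0 * h2 - u 2 * h0
    have ht : t = lg E (u 2 / u 0) := lg_unique E _ (div_ne_zero hu2 hu0) t hkey
    by_cases hu1 : u 1 = 0
    · have hC : C13P u := ⟨hu0, hu1, hu2⟩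
      have htq := tqF_c13 E hC
      refine ⟨?_, ?_, ?_, ?_, ?_⟩
      · rintro (⟨-, h⟩ | ⟨h, -⟩ | ⟨h, -⟩)
        exacts [hu2 h, hu0 h, hu0 h]
      · exact (mem_quower_iff _ _).2 (Or.inr (Or.inl (by rw [htq]; exact ht)))
      · intro hC'; exact absurd hu1 hC'.2.1
      · intro _; rw [htq]; exact ht
      · intro hC'; exact absurd hC'.1 hu0
    · have hM : MidP u := ⟨hu0, hu1, hu2⟩
      have htq := tqF_mid E hM
      refine ⟨?_, ?_, ?_, ?_, ?_⟩
      · rintro (⟨-, h⟩ | ⟨h, -⟩ | ⟨h, -⟩)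
        exacts [hu2 h, hu0 h, hu0 h]
      · exact (mem_quower_iff _ _).2 (Or.inr (Or.inl (by rw [htq]; exact ht)))
      · intro hC'; exact absurd hC'.2.2 hu2
      · intro hC'; exact absurd hC'.2.1 hu1
      · intro hC'; exact absurd hC'.1 hu0
  · -- agree on coordinates 1,2
    have hc0 : c ≠ 0 := fun h => hEs (by rw [h1, h, zero_mul])
    have hu1 : u 1 ≠ 0 := fun h => hEs (by rw [h1, h, mul_zero])
    have hu2 : u 2 ≠ 0 := fun h => hEt (by rw [h2, h, mul_zero])
    have hts : ((E (t - s) : Fˣ) : F) * ((E s : Fˣ) : F) = ((E t : Fˣ) : F) :=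
      E_sub_mul E hE t s
    have hXX : ((E (t - s) : Fˣ) : F) * u 1 = u 2 := by
      apply mul_left_cancel₀ hc0
      linear_combination hts - ((E (t - s) : Fˣ) : F) * h1 + h2
    by_cases hu0 : u 0 = 0
    · have hC : C23P u := ⟨hu0, hu1, hu2⟩
      have htq := tqF_c23 E hC
      have hd : t - s = lg E (u 2 / u 1) :=
        lg_unique E _ (div_ne_zero hu2 hu1) _ (by rw [eq_div_iff hu1]; exact hXX)
      refine ⟨?_, ?_, ?_, ?_, ?_⟩
      · rintro (⟨h, -⟩ | ⟨-, h⟩ | ⟨-, h⟩)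
        exacts [hu1 h, hu2 h, hu1 h]
      · refine (mem_quower_iff _ _).2 (Or.inr (Or.inr ?_))
        rw [htq]; simpa using hd
      · intro hC'; exact absurd hu0 hC'.1
      · intro hC'; exact absurd hu0 hC'.1
      · intro _; rw [htq]; simpa using hd
    · have hM : MidP u := ⟨hu0, hu1, hu2⟩
      have htq := tqF_mid E hM
      have hEa : ((E (lg E (u 1 / u 0)) : Fˣ) : F) = u 1 / u 0 :=
        lg_spec E _ (div_ne_zero hu1 hu0)
      have hEb : ((E (lg E (u 2 / u 0)) : Fˣ) : F) = u 2 / u 0 :=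
        lg_spec E _ (div_ne_zero hu2 hu0)
      have hba := E_sub_mul E hE (lg E (u 2 / u 0)) (lg E (u 1 / u 0))
      rw [hEa, hEb] at hba
      have hYY : ((E (lg E (u 2 / u 0) - lg E (u 1 / u 0)) : Fˣ) : F) * u 1 = u 2 := by
        rw [eq_div_iff hu0, mul_assoc, div_mul_cancel₀ _ hu0] at hba
        exact hba
      have heq : t - s = lg E (u 2 / u 0) - lg E (u 1 / u 0) :=
        E.injective (Units.ext (mul_right_cancel₀ hu1 (hXX.trans hYY.symm)))
      refine ⟨?_, ?_, ?_, ?_, ?_⟩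
      · rintro (⟨h, -⟩ | ⟨-, h⟩ | ⟨-, h⟩)
        exacts [hu1 h, hu2 h, hu1 h]
      · refine (mem_quower_iff _ _).2 (Or.inr (Or.inr ?_))
        rw [htq]; exact heq
      · intro hC'; exact absurd hC'.2.2 hu2
      · intro hC'; exact absurd hC'.2.1 hu1
      · intro hC'; exact absurd hC'.1 hu0

lemma edge23_classify (hE : ∀ a b : ZMod n, E (a + b) = E a * E b)
    (u : Fin 3 → F) (t : ZMod n)
    (hmem : (![(0 : F), (1 : F), ((E t : Fˣ) : F)]) ∈ extBall F u) :
    C23P u ∨ (u 0 = 0 ∧ u 1 ≠ 0 ∧ u 2 = 0) ∨ (u 0 = 0 ∧ u 1 = 0 ∧ u 2 ≠ 0)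
      ∨ (MidP u ∧ t = (tqF E u).2 - (tqF E u).1) := by
  obtain ⟨c, hc⟩ := (mem_extBall_iff u _).1 hmem
  simp only [Matrix.cons_val_zero, Matrix.cons_val_one, Matrix.head_cons,
    Matrix.cons_val_two, Matrix.tail_cons] at hc
  have hEt : ((E t : Fˣ) : F) ≠ 0 := Units.ne_zero _
  rcases hc with ⟨h0, h1⟩ | ⟨h0, h2⟩ | ⟨h1, h2⟩
  · have hc0 : c ≠ 0 := fun h => one_ne_zero (by rw [h1, h, zero_mul])
    have hu1 : u 1 ≠ 0 := fun h => one_ne_zero (by rw [h1, h, mul_zero])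
    have hu0 : u 0 = 0 := by
      rcases mul_eq_zero.1 h0.symm with h | h
      · exact absurd h hc0
      · exact h
    by_cases hu2 : u 2 = 0
    · exact Or.inr (Or.inl ⟨hu0, hu1, hu2⟩)
    · exact Or.inl ⟨hu0, hu1, hu2⟩
  · have hc0 : c ≠ 0 := fun h => hEt (by rw [h2, h, zero_mul])
    have hu2 : u 2 ≠ 0 := fun h => hEt (by rw [h2, h, mul_zero])
    have hu0 : u 0 = 0 := by
      rcases mul_eq_zero.1 h0.symm with h | h
      · exact absurd h hc0
      · exact h
    by_cases hu1 : u 1 = 0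
    · exact Or.inr (Or.inr (Or.inl ⟨hu0, hu1, hu2⟩))
    · exact Or.inl ⟨hu0, hu1, hu2⟩
  · have hc0 : c ≠ 0 := fun h => one_ne_zero (by rw [h1, h, zero_mul])
    have hu1 : u 1 ≠ 0 := fun h => one_ne_zero (by rw [h1, h, mul_zero])
    have hu2 : u 2 ≠ 0 := fun h => hEt (by rw [h2, h, mul_zero])
    have hXX : ((E t : Fˣ) : F) * u 1 = u 2 := by
      apply mul_left_cancel₀ hc0
      linear_combination h2 - ((E t : Fˣ) : F) * h1
    by_cases hu0 : u 0 = 0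
    · exact Or.inl ⟨hu0, hu1, hu2⟩
    · have hM : MidP u := ⟨hu0, hu1, hu2⟩
      have htq := tqF_mid E hM
      have hEa : ((E (lg E (u 1 / u 0)) : Fˣ) : F) = u 1 / u 0 :=
        lg_spec E _ (div_ne_zero hu1 hu0)
      have hEb : ((E (lg E (u 2 / u 0)) : Fˣ) : F) = u 2 / u 0 :=
        lg_spec E _ (div_ne_zero hu2 hu0)
      have hba := E_sub_mul E hE (lg E (u 2 / u 0)) (lg E (u 1 / u 0))
      rw [hEa, hEb] at hba
      have hYY : ((E (lg E (u 2 / u 0) - lg E (u 1 / u 0)) : Fˣ) : F) * u 1 = u 2 := by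
        rw [eq_div_iff hu0, mul_assoc, div_mul_cancel₀ _ hu0] at hba
        exact hba
      have heq : t = lg E (u 2 / u 0) - lg E (u 1 / u 0) :=
        E.injective (Units.ext (mul_right_cancel₀ hu1 (hXX.trans hYY.symm)))
      exact Or.inr (Or.inr (Or.inr ⟨hM, by rw [htq]; exact heq⟩))

lemma edge12_classify (u : Fin 3 → F) (s : ZMod n)
    (hmem : (![(1 : F), ((E s : Fˣ) : F), (0 : F)]) ∈ extBall F u) :
    C12P u ∨ (u 0 ≠ 0 ∧ u 1 = 0 ∧ u 2 = 0) ∨ (u 0 = 0 ∧ u 1 ≠ 0 ∧ u 2 = 0)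
      ∨ (MidP u ∧ s = (tqF E u).1) := by
  obtain ⟨c, hc⟩ := (mem_extBall_iff u _).1 hmem
  simp only [Matrix.cons_val_zero, Matrix.cons_val_one, Matrix.head_cons,
    Matrix.cons_val_two, Matrix.tail_cons] at hc
  have hEs : ((E s : Fˣ) : F) ≠ 0 := Units.ne_zero _
  rcases hc with ⟨h0, h1⟩ | ⟨h0, h2⟩ | ⟨h1, h2⟩
  · have hc0 : c ≠ 0 := fun h => one_ne_zero (by rw [h0, h, zero_mul])
    have hu0 : u 0 ≠ 0 := fun h => one_ne_zero (by rw [h0, h, mul_zero])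
    have hu1 : u 1 ≠ 0 := fun h => hEs (by rw [h1, h, mul_zero])
    have hkey : ((E s : Fˣ) : F) = u 1 / u 0 := by
      rw [eq_div_iff hu0]
      linear_combination u 0 * h1 - u 1 * h0
    have hs : s = lg E (u 1 / u 0) := lg_unique E _ (div_ne_zero hu1 hu0) s hkey
    by_cases hu2 : u 2 = 0
    · exact Or.inl ⟨hu0, hu1, hu2⟩
    · have hM : MidP u := ⟨hu0, hu1, hu2⟩
      exact Or.inr (Or.inr (Or.inr ⟨hM, by rw [tqF_mid E hM]; exact hs⟩))
  · have hc0 : c ≠ 0 := fun h => one_ne_zero (by rw [h0, h, zero_mul])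
    have hu0 : u 0 ≠ 0 := fun h => one_ne_zero (by rw [h0, h, mul_zero])
    have hu2 : u 2 = 0 := by
      rcases mul_eq_zero.1 h2.symm with h | h
      · exact absurd h hc0
      · exact h
    by_cases hu1 : u 1 = 0
    · exact Or.inr (Or.inl ⟨hu0, hu1, hu2⟩)
    · exact Or.inl ⟨hu0, hu1, hu2⟩
  · have hc0 : c ≠ 0 := fun h => hEs (by rw [h1, h, zero_mul])
    have hu1 : u 1 ≠ 0 := fun h => hEs (by rw [h1, h, mul_zero])
    have hu2 : u 2 = 0 := by
      rcases mul_eq_zero.1 h2.symm with h | h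
      · exact absurd h hc0
      · exact h
    by_cases hu0 : u 0 = 0
    · exact Or.inr (Or.inr (Or.inl ⟨hu0, hu1, hu2⟩))
    · exact Or.inl ⟨hu0, hu1, hu2⟩

lemma edge13_classify (u : Fin 3 → F) (t : ZMod n)
    (hmem : (![(1 : F), (0 : F), ((E t : Fˣ) : F)]) ∈ extBall F u) :
    C13P u ∨ (u 0 ≠ 0 ∧ u 1 = 0 ∧ u 2 = 0) ∨ (u 0 = 0 ∧ u 1 = 0 ∧ u 2 ≠ 0)
      ∨ (MidP u ∧ t = (tqF E u).2) := by
  obtain ⟨c, hc⟩ := (mem_extBall_iff u _).1 hmem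
  simp only [Matrix.cons_val_zero, Matrix.cons_val_one, Matrix.head_cons,
    Matrix.cons_val_two, Matrix.tail_cons] at hc
  have hEt : ((E t : Fˣ) : F) ≠ 0 := Units.ne_zero _
  rcases hc with ⟨h0, h1⟩ | ⟨h0, h2⟩ | ⟨h1, h2⟩
  · have hc0 : c ≠ 0 := fun h => one_ne_zero (by rw [h0, h, zero_mul])
    have hu0 : u 0 ≠ 0 := fun h => one_ne_zero (by rw [h0, h, mul_zero])
    have hu1 : u 1 = 0 := by
      rcases mul_eq_zero.1 h1.symm with h | h
      · exact absurd h hc0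
      · exact h
    by_cases hu2 : u 2 = 0
    · exact Or.inr (Or.inl ⟨hu0, hu1, hu2⟩)
    · exact Or.inl ⟨hu0, hu1, hu2⟩
  · have hc0 : c ≠ 0 := fun h => one_ne_zero (by rw [h0, h, zero_mul])
    have hu0 : u 0 ≠ 0 := fun h => one_ne_zero (by rw [h0, h, mul_zero])
    have hu2 : u 2 ≠ 0 := fun h => hEt (by rw [h2, h, mul_zero])
    have hkey : ((E t : Fˣ) : F) = u 2 / u 0 := by
      rw [eq_div_iff hu0]
      linear_combination u 0 * h2 - u 2 * h0
    have ht : t = lg E (u 2 / u 0) := lg_unique E _ (div_ne_zero hu2 hu0) t hkey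
    by_cases hu1 : u 1 = 0
    · exact Or.inl ⟨hu0, hu1, hu2⟩
    · have hM : MidP u := ⟨hu0, hu1, hu2⟩
      exact Or.inr (Or.inr (Or.inr ⟨hM, by rw [tqF_mid E hM]; exact ht⟩))
  · have hc0 : c ≠ 0 := fun h => hEt (by rw [h2, h, zero_mul])
    have hu2 : u 2 ≠ 0 := fun h => hEt (by rw [h2, h, mul_zero])
    have hu1 : u 1 = 0 := by
      rcases mul_eq_zero.1 h1.symm with h | h
      · exact absurd h hc0
      · exact h
    by_cases hu0 : u 0 = 0
    · exact Or.inr (Or.inr (Or.inl ⟨hu0, hu1, hu2⟩))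
    · exact Or.inl ⟨hu0, hu1, hu2⟩

end Classify2


section Lower
variable {F : Type*} [Field F] [Fintype F] [DecidableEq F]

lemma lower_aux {n k : ℕ} (hn4 : 4 ≤ n) (hcardu : Fintype.card Fˣ = n)
    (v : Fin k → Fin 3 → F)
    (hcov : (⋃ i, extBall F (v i)) = Set.univ) :
    ∃ X : Set (ZMod n × ZMod n),
      (Set.univ \ diag n (1, 1) ⊆ ⋃ x ∈ X, quower n x) ∧ X.ncard + 2 ≤ k := by
  haveI : NeZero n := ⟨by omega⟩
  obtain ⟨E, hE⟩ := exists_expE (F := F) (n := n) hcardu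
  have COV : ∀ w : Fin 3 → F, ∃ i, w ∈ extBall F (v i) := by
    intro w
    have hw : w ∈ ⋃ i, extBall F (v i) := by rw [hcov]; trivial
    exact Set.mem_iUnion.1 hw
  have hkcard : (Set.univ : Set (Fin k)).ncard = k := by
    rw [Set.ncard_univ, Nat.card_eq_fintype_card, Fintype.card_fin]
  have hdiff : ∀ S : Set (Fin k), (Set.univ \ S).ncard = k - S.ncard := fun S => by
    rw [Set.ncard_diff (Set.subset_univ S), hkcard]
  have hle : ∀ S : Set (Fin k), S.ncard ≤ k := fun S => by
    exact (Set.ncard_le_ncard (Set.subset_univ S) (Set.toFinite _)).trans_eq hkcard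
  have hXmain : ∀ hnk : n ≤ k, ∃ X : Set (ZMod n × ZMod n),
      CoversOffDiag X ∧ X.ncard + 2 ≤ k := fun hnk =>
    ⟨XmainSet n, XmainSet_covers n, by have := XmainSet_ncard n hn4; omega⟩
  have hnle : ∀ (f : ZMod n → Fin k), Function.Injective f → n ≤ k := by
    intro f hf
    calc n = Fintype.card (ZMod n) := (ZMod.card n).symm
      _ ≤ Fintype.card (Fin k) := Fintype.card_le_of_injective f hf
      _ = k := Fintype.card_fin k
  suffices hsuf : ∃ X : Set (ZMod n × ZMod n), CoversOffDiag X ∧ X.ncard + 2 ≤ k by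
    obtain ⟨X, h1, h2⟩ := hsuf
    exact ⟨X, covers_target_of_offdiag h1, h2⟩
  by_cases hA : ∃ i j : Fin k, i ≠ j ∧ CarP (v i) ∧ CarP (v j)
  · -- two cardinals : drop both
    obtain ⟨i0, j0, hij, hci, hcj⟩ := hA
    refine ⟨tqF E ∘ v '' (Set.univ \ {i0, j0}), ?_, ?_⟩
    · intro s t _
      obtain ⟨i, hi⟩ := COV (![(1 : F), ((E s : Fˣ) : F), ((E t : Fˣ) : F)])
      obtain ⟨hncar, hq, -, -, -⟩ := torus_classify E hE (v i) s t hi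
      have hiS : i ∈ Set.univ \ ({i0, j0} : Set (Fin k)) := by
        refine ⟨trivial, ?_⟩
        rintro (rfl | rfl)
        exacts [hncar hci, hncar hcj]
      exact Set.mem_biUnion (Set.mem_image_of_mem _ hiS) hq
    · have h1 := Set.ncard_image_le (s := Set.univ \ ({i0, j0} : Set (Fin k)))
        (f := tqF E ∘ v) (Set.toFinite _)
      have h2 := hdiff {i0, j0}
      have h3 := Set.ncard_pair hij
      have h4 := hle {i0, j0}
      omega
  · by_cases hCar : ∃ i, CarP (v i)
    · obtain ⟨i0, hci0⟩ := hCar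
      have huniq : ∀ i, CarP (v i) → i = i0 := fun i hci => by
        by_contra h
        exact hA ⟨i, i0, h, hci, hci0⟩
      by_cases h23 : ∃ j, C23P (v j)
      · -- cardinal + coast of type 23 : shift transform
        obtain ⟨j0, hj0⟩ := h23
        have hij0 : i0 ≠ j0 := fun h => carP_not_c23 (h ▸ hci0) hj0
        set δ0 := (tqF E (v j0)).2 - (tqF E (v j0)).1 with hδ0
        set R := tqF E ∘ v '' (Set.univ \ {i0, j0}) with hR
        have hypR : ∀ s t : ZMod n, t - s ≠ δ0 → (s, t) ∈ ⋃ x ∈ R, quower n x := by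
          intro s t hd
          obtain ⟨i, hi⟩ := COV (![(1 : F), ((E s : Fˣ) : F), ((E t : Fˣ) : F)])
          obtain ⟨hncar, hq, -, -, hc23i⟩ := torus_classify E hE (v i) s t hi
          have hiS : i ∈ Set.univ \ ({i0, j0} : Set (Fin k)) := by
            refine ⟨trivial, ?_⟩
            rintro (rfl | rfl)
            exacts [hncar hci0, hd (hc23i hj0)]
          exact Set.mem_biUnion (Set.mem_image_of_mem _ hiS) hq
        refine ⟨_, transform_diag R δ0 hypR, ?_⟩
        have h0 := Set.ncard_image_le (s := R)
          (f := fun x : ZMod n × ZMod n => (x.1, x.2 - δ0)) (Set.toFinite _)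
        have h1 := Set.ncard_image_le (s := Set.univ \ ({i0, j0} : Set (Fin k)))
          (f := tqF E ∘ v) (Set.toFinite _)
        have h2 := hdiff {i0, j0}
        have h3 := Set.ncard_pair hij0
        have h4 := hle {i0, j0}
        rw [← hR] at h1
        omega
      · by_cases h12 : ∃ j, C12P (v j)
        · -- cardinal + coast of type 12 : vert transform
          obtain ⟨j0, hj0⟩ := h12
          have hij0 : i0 ≠ j0 := fun h => carP_not_c12 (h ▸ hci0) hj0
          set a0 := (tqF E (v j0)).1 with ha0
          set R := tqF E ∘ v '' (Set.univ \ {i0, j0}) with hR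
          have hypR : ∀ s t : ZMod n, s ≠ a0 → (s, t) ∈ ⋃ x ∈ R, quower n x := by
            intro s t hd
            obtain ⟨i, hi⟩ := COV (![(1 : F), ((E s : Fˣ) : F), ((E t : Fˣ) : F)])
            obtain ⟨hncar, hq, hc12i, -, -⟩ := torus_classify E hE (v i) s t hi
            have hiS : i ∈ Set.univ \ ({i0, j0} : Set (Fin k)) := by
              refine ⟨trivial, ?_⟩
              rintro (rfl | rfl)
              exacts [hncar hci0, hd (hc12i hj0)]
            exact Set.mem_biUnion (Set.mem_image_of_mem _ hiS) hq
          refine ⟨_, transform_vert R a0 hypR, ?_⟩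
          have h0 := Set.ncard_image_le (s := R)
            (f := fun x : ZMod n × ZMod n => (x.2 - x.1, x.2 - a0)) (Set.toFinite _)
          have h1 := Set.ncard_image_le (s := Set.univ \ ({i0, j0} : Set (Fin k)))
            (f := tqF E ∘ v) (Set.toFinite _)
          have h2 := hdiff {i0, j0}
          have h3 := Set.ncard_pair hij0
          have h4 := hle {i0, j0}
          rw [← hR] at h1
          omega
        · by_cases h13 : ∃ j, C13P (v j)
          · -- cardinal + coast of type 13 : horiz transform
            obtain ⟨j0, hj0⟩ := h13
            have hij0 : i0 ≠ j0 := fun h => carP_not_c13 (h ▸ hci0) hj0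
            set b0 := (tqF E (v j0)).2 with hb0
            set R := tqF E ∘ v '' (Set.univ \ {i0, j0}) with hR
            have hypR : ∀ s t : ZMod n, t ≠ b0 → (s, t) ∈ ⋃ x ∈ R, quower n x := by
              intro s t hd
              obtain ⟨i, hi⟩ := COV (![(1 : F), ((E s : Fˣ) : F), ((E t : Fˣ) : F)])
              obtain ⟨hncar, hq, -, hc13i, -⟩ := torus_classify E hE (v i) s t hi
              have hiS : i ∈ Set.univ \ ({i0, j0} : Set (Fin k)) := by
                refine ⟨trivial, ?_⟩
                rintro (rfl | rfl)
                exacts [hncar hci0, hd (hc13i hj0)]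
              exact Set.mem_biUnion (Set.mem_image_of_mem _ hiS) hq
            refine ⟨_, transform_horiz R b0 hypR, ?_⟩
            have h0 := Set.ncard_image_le (s := R)
              (f := fun x : ZMod n × ZMod n => (x.1, x.1 - x.2 + b0)) (Set.toFinite _)
            have h1 := Set.ncard_image_le (s := Set.univ \ ({i0, j0} : Set (Fin k)))
              (f := tqF E ∘ v) (Set.toFinite _)
            have h2 := hdiff {i0, j0}
            have h3 := Set.ncard_pair hij0
            have h4 := hle {i0, j0}
            rw [← hR] at h1
            omega
          · -- unique cardinal, no coasts at all
            rcases hci0 with ⟨hz1, hz2⟩ | ⟨hz0, hz2⟩ | ⟨hz0, hz1⟩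
            · -- e1-type : edge 23 forces all offsets among midlands
              have hsur : ∀ t : ZMod n, ∃ i, MidP (v i) ∧
                  (tqF E (v i)).2 - (tqF E (v i)).1 = t := by
                intro t
                obtain ⟨i, hi⟩ := COV (![(0 : F), (1 : F), ((E t : Fˣ) : F)])
                rcases edge23_classify E hE (v i) t hi with hC | hC | hC | hC
                · exact absurd ⟨i, hC⟩ h23
                · have := huniq i (Or.inr (Or.inl ⟨hC.1, hC.2.2⟩))
                  exact absurd (this ▸ hC.2.1) (fun hx => hx hz1)
                · have := huniq i (Or.inr (Or.inr ⟨hC.1, hC.2.1⟩))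
                  exact absurd (this ▸ hC.2.2) (fun hx => hx hz2)
                · exact ⟨i, hC.1, hC.2.symm⟩
              refine hXmain (hnle (fun t => (hsur t).choose) ?_)
              intro t1 t2 h
              have e1 := (hsur t1).choose_spec.2
              have e2 := (hsur t2).choose_spec.2
              rw [show (hsur t1).choose = (hsur t2).choose from h] at e1
              exact e1.symm.trans e2
            · -- e2-type : edge 13 forces all rows among midlands
              have hsur : ∀ t : ZMod n, ∃ i, MidP (v i) ∧ (tqF E (v i)).2 = t := by
                intro t
                obtain ⟨i, hi⟩ := COV (![(1 : F), (0 : F), ((E t : Fˣ) : F)])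
                rcases edge13_classify E (v i) t hi with hC | hC | hC | hC
                · exact absurd ⟨i, hC⟩ h13
                · have := huniq i (Or.inl ⟨hC.2.1, hC.2.2⟩)
                  exact absurd (this ▸ hC.1) (fun hx => hx hz0)
                · have := huniq i (Or.inr (Or.inr ⟨hC.1, hC.2.1⟩))
                  exact absurd (this ▸ hC.2.2) (fun hx => hx hz2)
                · exact ⟨i, hC.1, hC.2.symm⟩
              refine hXmain (hnle (fun t => (hsur t).choose) ?_)
              intro t1 t2 h
              have e1 := (hsur t1).choose_spec.2
              have e2 := (hsur t2).choose_spec.2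
              rw [show (hsur t1).choose = (hsur t2).choose from h] at e1
              exact e1.symm.trans e2
            · -- e3-type : edge 12 forces all columns among midlands
              have hsur : ∀ s : ZMod n, ∃ i, MidP (v i) ∧ (tqF E (v i)).1 = s := by
                intro s
                obtain ⟨i, hi⟩ := COV (![(1 : F), ((E s : Fˣ) : F), (0 : F)])
                rcases edge12_classify E (v i) s hi with hC | hC | hC | hC
                · exact absurd ⟨i, hC⟩ h12
                · have := huniq i (Or.inl ⟨hC.2.1, hC.2.2⟩)
                  exact absurd (this ▸ hC.1) (fun hx => hx hz0)
                · have := huniq i (Or.inr (Or.inl ⟨hC.1, hC.2.2⟩))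
                  exact absurd (this ▸ hC.2.1) (fun hx => hx hz1)
                · exact ⟨i, hC.1, hC.2.symm⟩
              refine hXmain (hnle (fun s => (hsur s).choose) ?_)
              intro t1 t2 h
              have e1 := (hsur t1).choose_spec.2
              have e2 := (hsur t2).choose_spec.2
              rw [show (hsur t1).choose = (hsur t2).choose from h] at e1
              exact e1.symm.trans e2
    · -- no cardinal at all
      by_cases h12 : ∃ j, C12P (v j)
      · by_cases h13 : ∃ j, C13P (v j)
        · by_cases h23 : ∃ j, C23P (v j)
          · -- all three coast types : merge + shift
            obtain ⟨j1, hj1⟩ := h12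
            obtain ⟨j2, hj2⟩ := h13
            obtain ⟨j3, hj3⟩ := h23
            have h12ne : j1 ≠ j2 := fun h => c12_not_c13 (h ▸ hj1) hj2
            have h13ne : j1 ≠ j3 := fun h => c12_not_c23 (h ▸ hj1) hj3
            have h23ne : j2 ≠ j3 := fun h => c13_not_c23 (h ▸ hj2) hj3
            set a0 := (tqF E (v j1)).1 with ha0
            set b0 := (tqF E (v j2)).2 with hb0
            set δ0 := (tqF E (v j3)).2 - (tqF E (v j3)).1 with hδ0
            set R := insert (a0, b0) (tqF E ∘ v '' (Set.univ \ {j1, j2, j3})) with hR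
            have hypR : ∀ s t : ZMod n, t - s ≠ δ0 → (s, t) ∈ ⋃ x ∈ R, quower n x := by
              intro s t hd
              obtain ⟨i, hi⟩ := COV (![(1 : F), ((E s : Fˣ) : F), ((E t : Fˣ) : F)])
              obtain ⟨-, hq, hc12i, hc13i, hc23i⟩ := torus_classify E hE (v i) s t hi
              by_cases hi1 : i = j1
              · refine quower_mem_of (Set.mem_insert _ _) (Or.inl ?_)
                subst hi1; exact hc12i hj1
              · by_cases hi2 : i = j2
                · refine quower_mem_of (Set.mem_insert _ _) (Or.inr (Or.inl ?_))
                  subst hi2; exact hc13i hj2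
                · by_cases hi3 : i = j3
                  · subst hi3; exact absurd (hc23i hj3) hd
                  · have hiS : i ∈ Set.univ \ ({j1, j2, j3} : Set (Fin k)) := by
                      refine ⟨trivial, ?_⟩
                      rintro (rfl | rfl | rfl)
                      exacts [hi1 rfl, hi2 rfl, hi3 rfl]
                    exact Set.mem_biUnion (Set.mem_insert_of_mem _
                      (Set.mem_image_of_mem _ hiS)) ((mem_quower_iff _ _).2 ((mem_quower_iff _ _).1 hq))
            refine ⟨_, transform_diag R δ0 hypR, ?_⟩
            have h0 := Set.ncard_image_le (s := R)
              (f := fun x : ZMod n × ZMod n => (x.1, x.2 - δ0)) (Set.toFinite _)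
            have h1 : R.ncard ≤ (tqF E ∘ v '' (Set.univ \ {j1, j2, j3})).ncard + 1 := by
              rw [hR]; exact Set.ncard_insert_le _ _
            have h2 := Set.ncard_image_le (s := Set.univ \ ({j1, j2, j3} : Set (Fin k)))
              (f := tqF E ∘ v) (Set.toFinite _)
            have h3 := hdiff {j1, j2, j3}
            have h4 : ({j1, j2, j3} : Set (Fin k)).ncard = 3 := by
              rw [Set.ncard_insert_of_notMem (by simp [h12ne, h13ne]) (Set.toFinite _),
                Set.ncard_pair h23ne]
            have h5 := hle {j1, j2, j3}
            omega
          · -- no type-23 coast : offsets surjective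
            have hsur : ∀ t : ZMod n, ∃ i, MidP (v i) ∧
                (tqF E (v i)).2 - (tqF E (v i)).1 = t := by
              intro t
              obtain ⟨i, hi⟩ := COV (![(0 : F), (1 : F), ((E t : Fˣ) : F)])
              rcases edge23_classify E hE (v i) t hi with hC | hC | hC | hC
              · exact absurd ⟨i, hC⟩ h23
              · exact absurd ⟨i, Or.inr (Or.inl ⟨hC.1, hC.2.2⟩)⟩ hCar
              · exact absurd ⟨i, Or.inr (Or.inr ⟨hC.1, hC.2.1⟩)⟩ hCar
              · exact ⟨i, hC.1, hC.2.symm⟩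
            refine hXmain (hnle (fun t => (hsur t).choose) ?_)
            intro t1 t2 h
            have e1 := (hsur t1).choose_spec.2
            have e2 := (hsur t2).choose_spec.2
            rw [show (hsur t1).choose = (hsur t2).choose from h] at e1
            exact e1.symm.trans e2
        · -- no type-13 coast : rows surjective
          have hsur : ∀ t : ZMod n, ∃ i, MidP (v i) ∧ (tqF E (v i)).2 = t := by
            intro t
            obtain ⟨i, hi⟩ := COV (![(1 : F), (0 : F), ((E t : Fˣ) : F)])
            rcases edge13_classify E (v i) t hi with hC | hC | hC | hC
            · exact absurd ⟨i, hC⟩ h13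
            · exact absurd ⟨i, Or.inl ⟨hC.2.1, hC.2.2⟩⟩ hCar
            · exact absurd ⟨i, Or.inr (Or.inr ⟨hC.1, hC.2.1⟩)⟩ hCar
            · exact ⟨i, hC.1, hC.2.symm⟩
          refine hXmain (hnle (fun t => (hsur t).choose) ?_)
          intro t1 t2 h
          have e1 := (hsur t1).choose_spec.2
          have e2 := (hsur t2).choose_spec.2
          rw [show (hsur t1).choose = (hsur t2).choose from h] at e1
          exact e1.symm.trans e2
      · -- no type-12 coast : columns surjective
        have hsur : ∀ s : ZMod n, ∃ i, MidP (v i) ∧ (tqF E (v i)).1 = s := by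
          intro s
          obtain ⟨i, hi⟩ := COV (![(1 : F), ((E s : Fˣ) : F), (0 : F)])
          rcases edge12_classify E (v i) s hi with hC | hC | hC | hC
          · exact absurd ⟨i, hC⟩ h12
          · exact absurd ⟨i, Or.inl ⟨hC.2.1, hC.2.2⟩⟩ hCar
          · exact absurd ⟨i, Or.inr (Or.inl ⟨hC.1, hC.2.2⟩)⟩ hCar
          · exact ⟨i, hC.1, hC.2.symm⟩
        refine hXmain (hnle (fun s => (hsur s).choose) ?_)
        intro t1 t2 h
        have e1 := (hsur t1).choose_spec.2
        have e2 := (hsur t2).choose_spec.2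
        rw [show (hsur t1).choose = (hsur t2).choose from h] at e1
        exact e1.symm.trans e2

lemma mem_diag11 {n : ℕ} (s t : ZMod n) : (s, t) ∈ diag n (1, 1) ↔ s = t := by
  constructor
  · rintro ⟨u, hu⟩
    have h1 : s = 1 + u := congrArg Prod.fst hu
    have h2 : t = 1 + u := congrArg Prod.snd hu
    rw [h1, h2]
  · rintro rfl
    exact ⟨s - 1, Prod.ext (by ring) (by ring)⟩

lemma upper_aux {F : Type*} [Field F] [Fintype F] [DecidableEq F] {n : ℕ}
    (hn4 : 4 ≤ n) (hcardu : Fintype.card Fˣ = n) :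
    ∃ v : Fin (xiD n + 2) → (Fin 3 → F), (∀ i, v i ≠ 0) ∧
      (⋃ i, extBall F (v i)) = Set.univ := by
  haveI : NeZero n := ⟨by omega⟩
  obtain ⟨E, hE⟩ := exists_expE (F := F) (n := n) hcardu
  -- an optimal xiD-cover
  have hne : {k | ∃ X : Set (ZMod n × ZMod n), X.ncard = k ∧
      Set.univ \ diag n (1, 1) ⊆ ⋃ x ∈ X, quower n x}.Nonempty := by
    refine ⟨(Set.univ : Set (ZMod n × ZMod n)).ncard, Set.univ, rfl, ?_⟩
    rintro ⟨s, t⟩ -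
    exact quower_mem_of (Set.mem_univ ((s, t) : ZMod n × ZMod n)) (Or.inl rfl)
  have hX0 : xiD n ∈ {k | ∃ X : Set (ZMod n × ZMod n), X.ncard = k ∧
      Set.univ \ diag n (1, 1) ⊆ ⋃ x ∈ X, quower n x} := Nat.sInf_mem hne
  obtain ⟨X, hXcard, hXcov⟩ := hX0
  have hcd : X.toFinset.card = xiD n := by
    rw [← Set.ncard_eq_toFinset_card' X, hXcard]
  let pick : Fin (xiD n) → ZMod n × ZMod n :=
    fun i => (X.toFinset.equivFin.symm (Fin.cast hcd.symm i) : ZMod n × ZMod n)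
  have hpick : ∀ i, pick i ∈ X := fun i =>
    Set.mem_toFinset.1 (X.toFinset.equivFin.symm (Fin.cast hcd.symm i)).2
  have hpick_sur : ∀ p ∈ X, ∃ i, pick i = p := by
    intro p hp
    refine ⟨Fin.cast hcd (X.toFinset.equivFin ⟨p, Set.mem_toFinset.2 hp⟩), ?_⟩
    simp [pick]
  let mids : Fin (xiD n) → (Fin 3 → F) :=
    fun i => ![1, ((E (pick i).1 : Fˣ) : F), ((E (pick i).2 : Fˣ) : F)]
  let vv : Fin (xiD n + 2) → (Fin 3 → F) := fun i =>
    if h : (i : ℕ) < xiD n then mids ⟨i, h⟩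
    else if (i : ℕ) = xiD n then ![1, 0, 0] else ![0, 1, 1]
  have hv1 : ∀ i : Fin (xiD n), vv ⟨i.1, by have := i.2; omega⟩ = mids i := by
    intro i
    show dite _ _ _ = _
    rw [dif_pos i.2]
  have hv2 : vv ⟨xiD n, by omega⟩ = ![1, 0, 0] := by
    show dite _ _ _ = _
    rw [dif_neg (lt_irrefl _), if_pos rfl]
  have hv3 : vv ⟨xiD n + 1, by omega⟩ = ![0, 1, 1] := by
    show dite _ _ _ = _
    rw [dif_neg (Nat.not_succ_lt_self), if_neg (Nat.succ_ne_self _)]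
  refine ⟨vv, ?_, ?_⟩
  · intro i hzero
    by_cases h : (i : ℕ) < xiD n
    · have : vv i 0 = 0 := by rw [hzero]; rfl
      rw [show vv i = mids ⟨i, h⟩ from by show dite _ _ _ = _; rw [dif_pos h]] at this
      exact one_ne_zero this
    · by_cases h' : (i : ℕ) = xiD n
      · have : vv i 0 = 0 := by rw [hzero]; rfl
        rw [show vv i = ![1, 0, 0] from by
          show dite _ _ _ = _; rw [dif_neg h, if_pos h']] at this
        exact one_ne_zero this
      · have : vv i 1 = 0 := by rw [hzero]; rfl
        rw [show vv i = ![0, 1, 1] from by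
          show dite _ _ _ = _; rw [dif_neg h, if_neg h']] at this
        exact one_ne_zero this
  · rw [Set.eq_univ_iff_forall]
    intro w
    have he1 : (![(1 : F), 0, 0]) ∈ Set.range vv := ⟨_, hv2⟩
    have he2 : (![(0 : F), 1, 1]) ∈ Set.range vv := ⟨_, hv3⟩
    by_cases h1 : w 1 = 0
    · refine Set.mem_iUnion.2 ⟨⟨xiD n, by omega⟩, ?_⟩
      rw [hv2]
      refine (mem_extBall_iff _ w).2 ⟨w 0, Or.inl ⟨?_, ?_⟩⟩
      · show w 0 = w 0 * 1; ring
      · show w 1 = w 0 * 0; rw [h1]; ring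
    · by_cases h2 : w 2 = 0
      · refine Set.mem_iUnion.2 ⟨⟨xiD n, by omega⟩, ?_⟩
        rw [hv2]
        refine (mem_extBall_iff _ w).2 ⟨w 0, Or.inr (Or.inl ⟨?_, ?_⟩)⟩
        · show w 0 = w 0 * 1; ring
        · show w 2 = w 0 * 0; rw [h2]; ring
      · by_cases h0 : w 0 = 0
        · refine Set.mem_iUnion.2 ⟨⟨xiD n + 1, by omega⟩, ?_⟩
          rw [hv3]
          refine (mem_extBall_iff _ w).2 ⟨w 1, Or.inl ⟨?_, ?_⟩⟩
          · show w 0 = w 1 * 0; rw [h0]; ring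
          · show w 1 = w 1 * 1; ring
        · -- torus point
          set s := lg E (w 1 / w 0) with hs
          set t := lg E (w 2 / w 0) with ht
          have hEs : ((E s : Fˣ) : F) = w 1 / w 0 := lg_spec E _ (div_ne_zero h1 h0)
          have hEt : ((E t : Fˣ) : F) = w 2 / w 0 := lg_spec E _ (div_ne_zero h2 h0)
          by_cases hst : s = t
          · have h12' : w 1 / w 0 = w 2 / w 0 := by rw [← hEs, ← hEt, hst]
            have hw12 : w 1 = w 2 := by
              field_simp at h12'
              first
              | exact h12'
              | exact h12'.symm
            refine Set.mem_iUnion.2 ⟨⟨xiD n + 1, by omega⟩, ?_⟩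
            rw [hv3]
            refine (mem_extBall_iff _ w).2 ⟨w 1, Or.inr (Or.inr ⟨?_, ?_⟩)⟩
            · show w 1 = w 1 * 1; ring
            · show w 2 = w 1 * 1; rw [← hw12]; ring
          · have hmem : ((s, t) : ZMod n × ZMod n) ∈ Set.univ \ diag n (1, 1) :=
              ⟨trivial, fun hd => hst ((mem_diag11 s t).1 hd)⟩
            obtain ⟨p, hpX, hq⟩ := Set.mem_iUnion₂.1 (hXcov hmem)
            obtain ⟨i, rfl⟩ := hpick_sur p hpX
            rcases (mem_quower_iff _ _).1 hq with hc | hc | hc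
            · -- s = col
              refine Set.mem_iUnion.2 ⟨⟨i.1, by have := i.2; omega⟩, ?_⟩
              rw [hv1]
              refine (mem_extBall_iff _ w).2 ⟨w 0, Or.inl ⟨?_, ?_⟩⟩
              · show w 0 = w 0 * 1; ring
              · show w 1 = w 0 * ((E (pick i).1 : Fˣ) : F)
                rw [← hc, hEs, mul_div_cancel₀ _ h0]
            · -- t = row
              refine Set.mem_iUnion.2 ⟨⟨i.1, by have := i.2; omega⟩, ?_⟩
              rw [hv1]
              refine (mem_extBall_iff _ w).2 ⟨w 0, Or.inr (Or.inl ⟨?_, ?_⟩)⟩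
              · show w 0 = w 0 * 1; ring
              · show w 2 = w 0 * ((E (pick i).2 : Fˣ) : F)
                rw [← hc, hEt, mul_div_cancel₀ _ h0]
            · -- offset
              refine Set.mem_iUnion.2 ⟨⟨i.1, by have := i.2; omega⟩, ?_⟩
              rw [hv1]
              have hA : ((E (pick i).1 : Fˣ) : F) ≠ 0 := Units.ne_zero _
              have hB : ((E (pick i).2 : Fˣ) : F) ≠ 0 := Units.ne_zero _
              have h5 : ((E (t - s) : Fˣ) : F) * ((E s : Fˣ) : F) = ((E t : Fˣ) : F) :=
                E_sub_mul E hE t s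
              rw [hEs, hEt] at h5
              have h6 : ((E (t - s) : Fˣ) : F) * w 1 = w 2 := by
                rw [eq_div_iff h0, mul_assoc, div_mul_cancel₀ _ h0] at h5
                exact h5
              have h7 : ((E ((pick i).2 - (pick i).1) : Fˣ) : F) * ((E (pick i).1 : Fˣ) : F)
                  = ((E (pick i).2 : Fˣ) : F) := E_sub_mul E hE _ _
              rw [← hc] at h7
              refine (mem_extBall_iff _ w).2
                ⟨w 1 / ((E (pick i).1 : Fˣ) : F), Or.inr (Or.inr ⟨?_, ?_⟩)⟩
              · show w 1 = w 1 / ((E (pick i).1 : Fˣ) : F) * ((E (pick i).1 : Fˣ) : F)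
                rw [div_mul_cancel₀ _ hA]
              · show w 2 = w 1 / ((E (pick i).1 : Fˣ) : F) * ((E (pick i).2 : Fˣ) : F)
                rw [div_mul_eq_mul_div, eq_div_iff hA]
                linear_combination w 1 * h7 - ((E (pick i).1 : Fˣ) : F) * h6

end Lower
end Stmt19Aux

theorem stmt_19 (q : ℕ) (hq : 5 ≤ q)
    (F : Type*) [Field F] [Fintype F] [DecidableEq F] (hcard : Fintype.card F = q) :
    shortCoverNum F = xiD (q - 1) + 2 := by
  have hn4 : 4 ≤ q - 1 := by omega
  have hcardu : Fintype.card Fˣ = q - 1 := by rw [Fintype.card_units, hcard]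
  obtain ⟨vv, hvnz, hvcov⟩ := Stmt19Aux.upper_aux (F := F) hn4 hcardu
  have hmem : (xiD (q - 1) + 2) ∈ {k | ∃ v : Fin k → (Fin 3 → F), (∀ i, v i ≠ 0) ∧
      (⋃ i, extBall F (v i)) = Set.univ} := ⟨vv, hvnz, hvcov⟩
  apply le_antisymm
  · exact Nat.sInf_le hmem
  · apply le_csInf ⟨_, hmem⟩
    rintro k ⟨v, hnz, hcov⟩
    obtain ⟨X, hXcov, hXle⟩ := Stmt19Aux.lower_aux hn4 hcardu v hcov
    have hxiD : xiD (q - 1) ≤ X.ncard := Nat.sInf_le ⟨X, rfl, hXcov⟩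
    omega
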